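/- arXiv:2212.00658 — 2 statements merged into one kernel-verified Lean document; each statement's English description precedes it below -/
import Mathlib

section
/- Let t ∈ (0,1/2) and n ≥ 1 be such that Γ_n(t) > 1. Then every OR-closed set A ⊆ {0,1}^n with |A| ≥ 2 satisfies p_A > t. -/
open scoped BigOperators

/-- A set `A ⊆ {0,1}ⁿ` (encoded as a `Finset` of Boolean vectors) is OR-closed if it is
closed under the coordinatewise OR operation. -/
def ORClosed {n : ℕ} (A : Finset (Fin n → Bool)) : Prop :=
  ∀ x ∈ A, ∀ y ∈ A, (fun i => x i || y i) ∈ A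

/-- For `X^n` uniformly distributed on `A`, `pA n A = max_{i ∈ [n]} P(X_i = 1)`. -/
noncomputable def pA (n : ℕ) (A : Finset (Fin n → Bool)) : ℝ :=
  ⨆ i : Fin n, ((A.filter fun x => x i = true).card : ℝ) / (A.card : ℝ)

/-- A probability distribution on a finite alphabet `α`, as a function `α → ℝ`. -/
def IsProbF {α : Type*} [Fintype α] (P : α → ℝ) : Prop :=
  (∀ x, 0 ≤ P x) ∧ ∑ x, P x = 1

/-- Shannon entropy (base 2) of a distribution on a finite alphabet. -/
noncomputable def HF {α : Type*} [Fintype α] (P : α → ℝ) : ℝ :=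
  -∑ x, P x * Real.logb 2 (P x)

/-- `W` is a symmetric coupling of `(P, P)`: a joint probability distribution on `α × α`
with `W(x,y) = W(y,x)` for all `x, y`, whose marginals are both `P`. -/
def IsSymCouplingF {α : Type*} [Fintype α] (W : α × α → ℝ) (P : α → ℝ) : Prop :=
  IsProbF W ∧ (∀ x y, W (x, y) = W (y, x)) ∧ ∀ x, (∑ y, W (x, y)) = P x

/-- The uniform distribution on a nonempty finset `A`. -/
noncomputable def unifOn {α : Type*} [Fintype α] [DecidableEq α] (A : Finset α) : α → ℝ :=
  fun x => if x ∈ A then ((A.card : ℝ))⁻¹ else 0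

/-- The distribution of `Z^n := X^n ∨ Y^n` when `(X^n, Y^n) ~ W`. -/
noncomputable def pushOr {n : ℕ} (W : ((Fin n → Bool) × (Fin n → Bool)) → ℝ) :
    (Fin n → Bool) → ℝ :=
  fun z => ∑ xy : (Fin n → Bool) × (Fin n → Bool),
    if (fun i => xy.1 i || xy.2 i) = z then W xy else 0

/-- `Γ_n(t)`: the infimum over probability distributions `P` on `{0,1}ⁿ` with `H(P) > 0` and
`P(X_i = 1) ≤ t` for every coordinate `i`, of the supremum over symmetric couplings
`W ∈ 𝒞_s(P)` of `H(X^n ∨ Y^n)/H(X^n)`. -/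
noncomputable def GammaN (n : ℕ) (t : ℝ) : ℝ :=
  sInf { r : ℝ | ∃ P : (Fin n → Bool) → ℝ, IsProbF P ∧ 0 < HF P ∧
    (∀ i : Fin n, (∑ x : Fin n → Bool, if x i = true then P x else 0) ≤ t) ∧
    r = sSup { s : ℝ | ∃ W : ((Fin n → Bool) × (Fin n → Bool)) → ℝ,
      IsSymCouplingF W P ∧ s = HF (pushOr W) / HF P } }

/- ### Auxiliary lemmas -/

lemma sum_negMulLog_le_log_card {α : Type*} [Fintype α] [DecidableEq α] (Q : α → ℝ)
    (h0 : ∀ x, 0 ≤ Q x) (h1 : ∑ x, Q x = 1) (A : Finset α)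
    (hsupp : ∀ x, x ∉ A → Q x = 0) :
    ∑ x, Real.negMulLog (Q x) ≤ Real.log A.card := by
  have hsum : ∑ x ∈ A, Q x = 1 := by
    rw [Finset.sum_subset A.subset_univ (fun x _ hx => hsupp x hx)]; exact h1
  set p : α → ℝ := fun x => if Q x = 0 then 1 else (Q x)⁻¹ with hp
  have hmem : ∀ x ∈ A, p x ∈ Set.Ioi (0:ℝ) := by
    intro x _
    by_cases h : Q x = 0
    · simp [p, h]
    · have : 0 < Q x := lt_of_le_of_ne (h0 x) (Ne.symm h)
      simp [p, h, this]
  have hjensen := strictConcaveOn_log_Ioi.concaveOn.le_map_sum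
    (t := A) (w := Q) (p := p) (fun x _ => h0 x) hsum hmem
  have hLHS : ∑ x ∈ A, Q x • Real.log (p x) = ∑ x ∈ A, Real.negMulLog (Q x) := by
    refine Finset.sum_congr rfl fun x _ => ?_
    by_cases h : Q x = 0
    · simp [p, h]
    · simp [p, h, Real.negMulLog, Real.log_inv]
  have hfull : ∑ x, Real.negMulLog (Q x) = ∑ x ∈ A, Real.negMulLog (Q x) := by
    rw [Finset.sum_subset A.subset_univ (fun x _ hx => by simp [hsupp x hx])]
  have hterm : ∀ x ∈ A, Q x • p x = if Q x = 0 then 0 else 1 := by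
    intro x _
    by_cases h : Q x = 0 <;> simp [p, h]
  have hle : ∑ x ∈ A, Q x • p x ≤ (A.card : ℝ) := by
    calc ∑ x ∈ A, Q x • p x ≤ ∑ x ∈ A, (1:ℝ) := by
          refine Finset.sum_le_sum fun x hx => ?_
          rw [hterm x hx]; by_cases h : Q x = 0 <;> simp [h]
      _ = A.card := by simp
  have hex : ∃ x ∈ A, Q x ≠ 0 := by
    by_contra h
    push_neg at h
    rw [Finset.sum_eq_zero (fun x hx => h x hx)] at hsum
    norm_num at hsum
  obtain ⟨x₀, hx₀, hQx₀⟩ := hex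
  have hpos : 0 < ∑ x ∈ A, Q x • p x := by
    refine Finset.sum_pos' (fun x hx => ?_) ⟨x₀, hx₀, ?_⟩
    · rw [hterm x hx]; by_cases h : Q x = 0 <;> simp [h]
    · rw [hterm x₀ hx₀]; simp [hQx₀]
  calc ∑ x, Real.negMulLog (Q x) = ∑ x ∈ A, Q x • Real.log (p x) := by rw [hfull, hLHS]
    _ ≤ Real.log (∑ x ∈ A, Q x • p x) := hjensen
    _ ≤ Real.log A.card := Real.log_le_log hpos hle

lemma HF_le_logb_card {α : Type*} [Fintype α] [DecidableEq α] (Q : α → ℝ) (hQ : IsProbF Q)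
    (A : Finset α) (hsupp : ∀ x, x ∉ A → Q x = 0) :
    HF Q ≤ Real.logb 2 A.card := by
  have h2 : (0:ℝ) < Real.log 2 := Real.log_pos one_lt_two
  have key := sum_negMulLog_le_log_card Q hQ.1 hQ.2 A hsupp
  have hrw : HF Q = (∑ x, Real.negMulLog (Q x)) / Real.log 2 := by
    rw [HF, Finset.sum_div, ← Finset.sum_neg_distrib]
    refine Finset.sum_congr rfl fun x _ => ?_
    rw [Real.logb, Real.negMulLog]
    ring
  rw [hrw, Real.logb]
  exact (div_le_div_iff_of_pos_right h2).mpr key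

lemma unifOn_isProb {α : Type*} [Fintype α] [DecidableEq α] (A : Finset α) (hA : A.Nonempty) :
    IsProbF (unifOn A) := by
  have hc : (0:ℝ) < A.card := by exact_mod_cast Finset.card_pos.mpr hA
  constructor
  · intro x; unfold unifOn; split
    · positivity
    · exact le_rfl
  · rw [show (∑ x, unifOn A x) = ∑ x ∈ Finset.univ, if x ∈ A then ((A.card:ℝ))⁻¹ else 0 from rfl,
      Finset.sum_ite_mem, Finset.univ_inter, Finset.sum_const, nsmul_eq_mul]
    field_simp

lemma HF_unifOn {α : Type*} [Fintype α] [DecidableEq α] (A : Finset α) (hA : A.Nonempty) :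
    HF (unifOn A) = Real.logb 2 A.card := by
  have hc : (0:ℝ) < A.card := by exact_mod_cast Finset.card_pos.mpr hA
  rw [HF]
  have : ∀ x : α, unifOn A x * Real.logb 2 (unifOn A x)
      = if x ∈ A then ((A.card:ℝ))⁻¹ * Real.logb 2 ((A.card:ℝ))⁻¹ else 0 := by
    intro x; unfold unifOn; by_cases h : x ∈ A <;> simp [h]
  rw [Finset.sum_congr rfl fun x _ => this x, Finset.sum_ite_mem, Finset.univ_inter,
    Finset.sum_const, nsmul_eq_mul, Real.logb_inv]
  field_simp

lemma HF_nonneg {α : Type*} [Fintype α] (P : α → ℝ) (hP : IsProbF P) : 0 ≤ HF P := by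
  rw [HF, neg_nonneg]
  refine Finset.sum_nonpos fun x _ => ?_
  have hle : P x ≤ 1 := by
    rw [← hP.2]
    exact Finset.single_le_sum (fun y _ => hP.1 y) (Finset.mem_univ x)
  rcases eq_or_lt_of_le (hP.1 x) with h | h
  · simp [← h]
  · exact mul_nonpos_of_nonneg_of_nonpos h.le (Real.logb_nonpos one_lt_two h.le hle)

lemma pushOr_isProb {n : ℕ} (W : ((Fin n → Bool) × (Fin n → Bool)) → ℝ) (hW : IsProbF W) :
    IsProbF (pushOr W) := by
  constructor
  · intro z
    refine Finset.sum_nonneg fun xy _ => ?_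
    split
    · exact hW.1 xy
    · exact le_rfl
  · rw [show (∑ z, pushOr W z) = ∑ z, ∑ xy : (Fin n → Bool) × (Fin n → Bool),
        if (fun i => xy.1 i || xy.2 i) = z then W xy else 0 from rfl, Finset.sum_comm]
    simp only [Finset.sum_ite_eq, Finset.mem_univ, if_true]
    exact hW.2

lemma coupling_support {α : Type*} [Fintype α] (W : α × α → ℝ) (P : α → ℝ)
    (hW : IsSymCouplingF W P) (x : α) (hx : P x = 0) : ∀ y, W (x, y) = 0 := by
  intro y
  have h := hW.2.2 x
  rw [hx] at h
  exact (Finset.sum_eq_zero_iff_of_nonneg (fun y _ => hW.1.1 (x, y))).mp h y (Finset.mem_univ y)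

lemma unifOn_marginal {n : ℕ} (A : Finset (Fin n → Bool)) (i : Fin n) :
    (∑ x : Fin n → Bool, if x i = true then unifOn A x else 0)
      = ((A.filter fun x => x i = true).card : ℝ) / (A.card : ℝ) := by
  have : ∀ x : Fin n → Bool, (if x i = true then unifOn A x else 0)
      = if x ∈ A.filter (fun x => x i = true) then ((A.card:ℝ))⁻¹ else 0 := by
    intro x
    unfold unifOn
    by_cases h1 : x i = true <;> by_cases h2 : x ∈ A <;> simp [h1, h2, Finset.mem_filter]
  rw [Finset.sum_congr rfl fun x _ => this x, Finset.sum_ite_mem, Finset.univ_inter,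
    Finset.sum_const, nsmul_eq_mul, div_eq_mul_inv]

theorem gammaN_gt_one_implies_strict_bound (n : ℕ) (hn : 1 ≤ n) (t : ℝ)
    (ht : t ∈ Set.Ioo (0 : ℝ) (1 / 2)) (hΓ : 1 < GammaN n t) :
    ∀ A : Finset (Fin n → Bool), ORClosed A → 2 ≤ A.card → t < pA n A := by
  intro A hOR hcard2
  by_contra hcon
  push_neg at hcon
  have hA : A.Nonempty := Finset.card_pos.mp (by omega)
  have hP := unifOn_isProb A hA
  have hHP : HF (unifOn A) = Real.logb 2 A.card := HF_unifOn A hA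
  have hcard1 : (1:ℝ) < A.card := by exact_mod_cast lt_of_lt_of_le one_lt_two hcard2
  have hHpos : 0 < HF (unifOn A) := by
    rw [hHP]; exact Real.logb_pos one_lt_two hcard1
  have hmarg : ∀ i : Fin n,
      (∑ x : Fin n → Bool, if x i = true then unifOn A x else 0) ≤ t := by
    intro i
    rw [unifOn_marginal A i]
    refine le_trans ?_ hcon
    exact le_ciSup (Set.Finite.bddAbove (Set.finite_range
      (fun i : Fin n => ((A.filter fun x => x i = true).card : ℝ) / (A.card : ℝ)))) i
  have hmem : sSup { s : ℝ | ∃ W : ((Fin n → Bool) × (Fin n → Bool)) → ℝ,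
      IsSymCouplingF W (unifOn A) ∧ s = HF (pushOr W) / HF (unifOn A) }
      ∈ { r : ℝ | ∃ P : (Fin n → Bool) → ℝ, IsProbF P ∧ 0 < HF P ∧
        (∀ i : Fin n, (∑ x : Fin n → Bool, if x i = true then P x else 0) ≤ t) ∧
        r = sSup { s : ℝ | ∃ W : ((Fin n → Bool) × (Fin n → Bool)) → ℝ,
          IsSymCouplingF W P ∧ s = HF (pushOr W) / HF P } } :=
    ⟨unifOn A, hP, hHpos, hmarg, rfl⟩
  have hbdd : BddBelow { r : ℝ | ∃ P : (Fin n → Bool) → ℝ, IsProbF P ∧ 0 < HF P ∧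
      (∀ i : Fin n, (∑ x : Fin n → Bool, if x i = true then P x else 0) ≤ t) ∧
      r = sSup { s : ℝ | ∃ W : ((Fin n → Bool) × (Fin n → Bool)) → ℝ,
        IsSymCouplingF W P ∧ s = HF (pushOr W) / HF P } } := by
    refine ⟨0, fun r hr => ?_⟩
    obtain ⟨P', hP', hH', _, rfl⟩ := hr
    apply Real.sSup_nonneg
    rintro s ⟨W, hW, rfl⟩
    exact div_nonneg (HF_nonneg _ (pushOr_isProb W hW.1)) hH'.le
  have h1 : GammaN n t ≤ sSup { s : ℝ | ∃ W : ((Fin n → Bool) × (Fin n → Bool)) → ℝ,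
      IsSymCouplingF W (unifOn A) ∧ s = HF (pushOr W) / HF (unifOn A) } :=
    csInf_le hbdd hmem
  have h2 : sSup { s : ℝ | ∃ W : ((Fin n → Bool) × (Fin n → Bool)) → ℝ,
      IsSymCouplingF W (unifOn A) ∧ s = HF (pushOr W) / HF (unifOn A) } ≤ 1 := by
    apply Real.sSup_le _ zero_le_one
    rintro s ⟨W, hW, rfl⟩
    rw [div_le_one hHpos, hHP]
    apply HF_le_logb_card _ (pushOr_isProb W hW.1) A
    intro z hz
    refine Finset.sum_eq_zero fun xy _ => ?_
    split
    case isTrue h =>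
      by_cases hx : xy.1 ∈ A
      · by_cases hy : xy.2 ∈ A
        · exact absurd (h ▸ hOR xy.1 hx xy.2 hy) hz
        · rw [show W xy = W (xy.2, xy.1) from hW.2.1 xy.1 xy.2]
          exact coupling_support W (unifOn A) hW xy.2 (by simp [unifOn, hy]) xy.1
      · exact coupling_support W (unifOn A) hW xy.1 (by simp [unifOn, hx]) xy.2
    case isFalse => rfl
  linarith
end

section
/- For jointly distributed random variables (X, Y, U) on finite alphabets, ρ_m(X;Y|U) = max over u with P_U(u) > 0 of ρ_m(X;Y|U=u), where ρ_m(X;Y|U=u) denotes the (unconditional) maximal correlation of a pair (X',Y') distributed according to the conditional distribution P_{XY|U=u}. -/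
open scoped BigOperators

/-- Expectation of a real random variable `F` on a finite sample space with distribution `P`. -/
noncomputable def EE {Ω : Type*} [Fintype Ω] (P : Ω → ℝ) (F : Ω → ℝ) : ℝ :=
  ∑ ω, P ω * F ω

/-- Covariance of two real random variables under `P`. -/
noncomputable def covF {Ω : Type*} [Fintype Ω] (P : Ω → ℝ) (F G : Ω → ℝ) : ℝ :=
  EE P (fun ω => F ω * G ω) - EE P F * EE P G

/-- Pearson correlation coefficient of two real random variables under `P`
(set to `0` when one of the variances vanishes). -/
noncomputable def pearsonF {Ω : Type*} [Fintype Ω] (P : Ω → ℝ) (F G : Ω → ℝ) : ℝ :=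
  if 0 < covF P F F * covF P G G then
    covF P F G / Real.sqrt (covF P F F * covF P G G)
  else 0

/-- Maximal correlation `ρ_m(X;Y)`: the supremum over real-valued functions `f, g` of the
Pearson correlation of `f(X)` and `g(Y)`. -/
noncomputable def maxCorrF {Ω S T : Type*} [Fintype Ω] (P : Ω → ℝ) (X : Ω → S) (Y : Ω → T) : ℝ :=
  ⨆ fg : (S → ℝ) × (T → ℝ), pearsonF P (fun ω => fg.1 (X ω)) (fun ω => fg.2 (Y ω))

/-- `P(U = v)`. -/
noncomputable def massOn {Ω V : Type*} [Fintype Ω] [DecidableEq V] (P : Ω → ℝ) (U : Ω → V)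
    (v : V) : ℝ :=
  ∑ ω, if U ω = v then P ω else 0

/-- The conditional distribution of `P` given `U = v`. -/
noncomputable def condDistOn {Ω V : Type*} [Fintype Ω] [DecidableEq V] (P : Ω → ℝ) (U : Ω → V)
    (v : V) : Ω → ℝ :=
  fun ω => if U ω = v then P ω / massOn P U v else 0

/-- `E[Cov(F, G | U)] = ∑_v P(U = v) Cov_{P(·|U=v)}(F, G)`. -/
noncomputable def ECondCov {Ω V : Type*} [Fintype Ω] [Fintype V] [DecidableEq V] (P : Ω → ℝ)
    (U : Ω → V) (F G : Ω → ℝ) : ℝ :=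
  ∑ v, massOn P U v * covF (condDistOn P U v) F G

/-- Conditional Pearson correlation
`ρ_p(F; G | U) = E[Cov(F,G|U)] / √(E[Var(F|U)] E[Var(G|U)])`
(set to `0` when the denominator vanishes). -/
noncomputable def condPearsonF {Ω V : Type*} [Fintype Ω] [Fintype V] [DecidableEq V]
    (P : Ω → ℝ) (U : Ω → V) (F G : Ω → ℝ) : ℝ :=
  if 0 < ECondCov P U F F * ECondCov P U G G then
    ECondCov P U F G / Real.sqrt (ECondCov P U F F * ECondCov P U G G)
  else 0

/-- Conditional maximal correlation `ρ_m(X;Y|U)`: the supremum over real-valued functions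
`f(x,u), g(y,u)` of `ρ_p(f(X,U); g(Y,U) | U)`. -/
noncomputable def condMaxCorrF {Ω S T V : Type*} [Fintype Ω] [Fintype V] [DecidableEq V]
    (P : Ω → ℝ) (X : Ω → S) (Y : Ω → T) (U : Ω → V) : ℝ :=
  ⨆ fg : (S × V → ℝ) × (T × V → ℝ),
    condPearsonF P U (fun ω => fg.1 (X ω, U ω)) (fun ω => fg.2 (Y ω, U ω))

section Aux
variable {Ω : Type*} [Fintype Ω]

lemma covF_eq (P F G : Ω → ℝ) (h1 : ∑ ω, P ω = 1) :
    covF P F G = ∑ ω, P ω * ((F ω - EE P F) * (G ω - EE P G)) := by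
  have h : ∑ ω, P ω * ((F ω - EE P F) * (G ω - EE P G))
      = ∑ ω, (P ω * (F ω * G ω) - EE P G * (P ω * F ω) - EE P F * (P ω * G ω)
          + (EE P F * EE P G) * P ω) := by
    apply Finset.sum_congr rfl; intro ω _; ring
  rw [h]
  simp only [Finset.sum_add_distrib, Finset.sum_sub_distrib, ← Finset.mul_sum, h1]
  simp only [covF, EE]
  ring

lemma covF_self_nonneg {P : Ω → ℝ} (hP : IsProbF P) (F : Ω → ℝ) : 0 ≤ covF P F F := by
  rw [covF_eq P F F hP.2]
  exact Finset.sum_nonneg fun ω _ => mul_nonneg (hP.1 ω) (mul_self_nonneg _)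

lemma covF_sq_le {P : Ω → ℝ} (hP : IsProbF P) (F G : Ω → ℝ) :
    covF P F G ^ 2 ≤ covF P F F * covF P G G := by
  have key : ∀ t : ℝ, 0 ≤ covF P G G * (t * t) + (2 * covF P F G) * t + covF P F F := by
    intro t
    have h : covF P G G * (t * t) + (2 * covF P F G) * t + covF P F F
        = ∑ ω, (P ω * ((F ω - EE P F) * (F ω - EE P F))
            + (t * t) * (P ω * ((G ω - EE P G) * (G ω - EE P G)))
            + (2 * t) * (P ω * ((F ω - EE P F) * (G ω - EE P G)))) := by
      simp only [Finset.sum_add_distrib, ← Finset.mul_sum,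
        ← covF_eq P F F hP.2, ← covF_eq P G G hP.2, ← covF_eq P F G hP.2]
      ring
    rw [h]
    apply Finset.sum_nonneg
    intro ω _
    have := mul_nonneg (hP.1 ω)
      (mul_self_nonneg ((F ω - EE P F) + t * (G ω - EE P G)))
    nlinarith [this]
  have hd := discrim_le_zero key
  rw [discrim] at hd
  nlinarith [hd]

lemma covF_le_sqrt {P : Ω → ℝ} (hP : IsProbF P) (F G : Ω → ℝ) :
    covF P F G ≤ Real.sqrt (covF P F F * covF P G G) := by
  have h1 : covF P F G ≤ |covF P F G| := le_abs_self _
  have h2 : |covF P F G| = Real.sqrt (covF P F G ^ 2) := (Real.sqrt_sq_eq_abs _).symm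
  calc covF P F G ≤ |covF P F G| := h1
    _ = Real.sqrt (covF P F G ^ 2) := h2
    _ ≤ Real.sqrt (covF P F F * covF P G G) := Real.sqrt_le_sqrt (covF_sq_le hP F G)

lemma pearsonF_le_one {P : Ω → ℝ} (hP : IsProbF P) (F G : Ω → ℝ) :
    pearsonF P F G ≤ 1 := by
  unfold pearsonF
  split_ifs with h
  · rw [div_le_one (Real.sqrt_pos.2 h)]
    exact covF_le_sqrt hP F G
  · norm_num

lemma covF_zero_left (P : Ω → ℝ) (G : Ω → ℝ) : covF P (fun _ => 0) G = 0 := by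
  simp [covF, EE]

end Aux
section Aux2
variable {Ω S T : Type*} [Fintype Ω]

lemma maxCorr_bddAbove {P : Ω → ℝ} (hP : IsProbF P) (X : Ω → S) (Y : Ω → T) :
    BddAbove (Set.range fun fg : (S → ℝ) × (T → ℝ) =>
      pearsonF P (fun ω => fg.1 (X ω)) (fun ω => fg.2 (Y ω))) := by
  refine ⟨1, ?_⟩
  rintro r ⟨fg, rfl⟩
  exact pearsonF_le_one hP _ _

lemma maxCorrF_le_one {P : Ω → ℝ} (hP : IsProbF P) (X : Ω → S) (Y : Ω → T) :
    maxCorrF P X Y ≤ 1 :=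
  ciSup_le fun _ => pearsonF_le_one hP _ _

lemma maxCorrF_nonneg {P : Ω → ℝ} (hP : IsProbF P) (X : Ω → S) (Y : Ω → T) :
    0 ≤ maxCorrF P X Y := by
  have h := le_ciSup (maxCorr_bddAbove hP X Y) ((fun _ => (0:ℝ)), (fun _ => (0:ℝ)))
  have h0 : pearsonF P (fun _ : Ω => (0:ℝ)) (fun _ : Ω => (0:ℝ)) = 0 := by
    simp [pearsonF, covF, EE]
  rw [h0] at h
  exact h

lemma pearson_le_maxCorrF {P : Ω → ℝ} (hP : IsProbF P) (X : Ω → S) (Y : Ω → T)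
    (f : S → ℝ) (g : T → ℝ) :
    pearsonF P (fun ω => f (X ω)) (fun ω => g (Y ω)) ≤ maxCorrF P X Y :=
  le_ciSup (maxCorr_bddAbove hP X Y) (f, g)

end Aux2

section Aux3
variable {Ω V : Type*} [Fintype Ω] [DecidableEq V]

lemma massOn_nonneg {P : Ω → ℝ} (hP : IsProbF P) (U : Ω → V) (v : V) :
    0 ≤ massOn P U v := by
  apply Finset.sum_nonneg
  intro ω _
  split
  · exact hP.1 ω
  · exact le_rfl

lemma condDistOn_isProb {P : Ω → ℝ} (hP : IsProbF P) (U : Ω → V) {v : V}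
    (hv : 0 < massOn P U v) : IsProbF (condDistOn P U v) := by
  constructor
  · intro ω
    simp only [condDistOn]
    split
    · exact div_nonneg (hP.1 ω) hv.le
    · exact le_rfl
  · have h : ∀ ω : Ω, condDistOn P U v ω = (if U ω = v then P ω else 0) / massOn P U v := by
      intro ω; simp only [condDistOn]; split <;> simp
    simp only [h, ← Finset.sum_div]
    rw [show (∑ ω, if U ω = v then P ω else 0) = massOn P U v from rfl]
    exact div_self hv.ne'

variable [Fintype V]

lemma sum_massOn {P : Ω → ℝ} (hP : IsProbF P) (U : Ω → V) :
    ∑ v, massOn P U v = 1 := by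
  rw [← hP.2]
  unfold massOn
  rw [Finset.sum_comm]
  apply Finset.sum_congr rfl
  intro ω _
  simp

lemma exists_massOn_pos {P : Ω → ℝ} (hP : IsProbF P) (U : Ω → V) :
    ∃ v, 0 < massOn P U v := by
  by_contra h
  push_neg at h
  have hz : ∀ v ∈ Finset.univ, massOn P U v = 0 := fun v _ =>
    le_antisymm (h v) (massOn_nonneg hP U v)
  have := sum_massOn hP U
  rw [Finset.sum_eq_zero hz] at this
  norm_num at this

lemma ECondCov_self_nonneg {P : Ω → ℝ} (hP : IsProbF P) (U : Ω → V) (F : Ω → ℝ) :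
    0 ≤ ECondCov P U F F := by
  apply Finset.sum_nonneg
  intro v _
  rcases (massOn_nonneg hP U v).eq_or_lt with h | h
  · rw [← h]; simp
  · exact mul_nonneg h.le (covF_self_nonneg (condDistOn_isProb hP U h) F)

lemma sum_massOn_sqrt_le {P : Ω → ℝ} (hP : IsProbF P) (U : Ω → V) (F G : Ω → ℝ) :
    ∑ v, massOn P U v *
      Real.sqrt (covF (condDistOn P U v) F F * covF (condDistOn P U v) G G)
      ≤ Real.sqrt (ECondCov P U F F * ECondCov P U G G) := by
  have h2 : (∑ v, massOn P U v * Real.sqrt (covF (condDistOn P U v) F F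
        * covF (condDistOn P U v) G G)) ^ 2
      ≤ ECondCov P U F F * ECondCov P U G G := by
    apply Finset.sum_sq_le_sum_mul_sum_of_sq_eq_mul
    · intro v _
      rcases (massOn_nonneg hP U v).eq_or_lt with h | h
      · rw [← h]; simp
      · exact mul_nonneg h.le (covF_self_nonneg (condDistOn_isProb hP U h) F)
    · intro v _
      rcases (massOn_nonneg hP U v).eq_or_lt with h | h
      · rw [← h]; simp
      · exact mul_nonneg h.le (covF_self_nonneg (condDistOn_isProb hP U h) G)
    · intro v _
      rcases (massOn_nonneg hP U v).eq_or_lt with h | h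
      · rw [← h]; simp
      · have hA := covF_self_nonneg (condDistOn_isProb hP U h) F
        have hB := covF_self_nonneg (condDistOn_isProb hP U h) G
        rw [mul_pow, Real.sq_sqrt (mul_nonneg hA hB)]
        ring
  have h3 : 0 ≤ ∑ v, massOn P U v * Real.sqrt (covF (condDistOn P U v) F F
      * covF (condDistOn P U v) G G) :=
    Finset.sum_nonneg fun v _ => mul_nonneg (massOn_nonneg hP U v) (Real.sqrt_nonneg _)
  exact (Real.le_sqrt h3 (mul_nonneg (ECondCov_self_nonneg hP U F)
    (ECondCov_self_nonneg hP U G))).2 h2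

lemma ECondCov_le_sqrt {P : Ω → ℝ} (hP : IsProbF P) (U : Ω → V) (F G : Ω → ℝ) :
    ECondCov P U F G ≤ Real.sqrt (ECondCov P U F F * ECondCov P U G G) := by
  have h1 : ECondCov P U F G ≤ ∑ v, massOn P U v *
      Real.sqrt (covF (condDistOn P U v) F F * covF (condDistOn P U v) G G) := by
    apply Finset.sum_le_sum
    intro v _
    rcases (massOn_nonneg hP U v).eq_or_lt with h | h
    · rw [← h]; simp
    · exact mul_le_mul_of_nonneg_left (covF_le_sqrt (condDistOn_isProb hP U h) F G) h.le
  exact h1.trans (sum_massOn_sqrt_le hP U F G)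

lemma condPearsonF_le_one {P : Ω → ℝ} (hP : IsProbF P) (U : Ω → V) (F G : Ω → ℝ) :
    condPearsonF P U F G ≤ 1 := by
  unfold condPearsonF
  split_ifs with h
  · rw [div_le_one (Real.sqrt_pos.2 h)]
    exact ECondCov_le_sqrt hP U F G
  · norm_num

end Aux3
section Aux4
variable {S T V : Type} [Fintype S] [Fintype T] [Fintype V] [DecidableEq V]

lemma massOn_proj (P : S × T × V → ℝ) (v : V) :
    massOn P (fun ω => ω.2.2) v = ∑ st : S × T, P (st.1, st.2, v) := by
  unfold massOn
  rw [Fintype.sum_prod_type]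
  rw [Fintype.sum_prod_type (f := fun st : S × T => P (st.1, st.2, v))]
  apply Finset.sum_congr rfl
  intro s _
  rw [Fintype.sum_prod_type]
  apply Finset.sum_congr rfl
  intro t _
  simp

lemma EE_condDistOn_proj (P : S × T × V → ℝ) (v : V) (F : S × T × V → ℝ) :
    EE (condDistOn P (fun ω : S × T × V => ω.2.2) v) F
      = EE (fun st : S × T => P (st.1, st.2, v) / massOn P (fun ω : S × T × V => ω.2.2) v)
          (fun st => F (st.1, st.2, v)) := by
  unfold EE condDistOn
  rw [Fintype.sum_prod_type]
  rw [Fintype.sum_prod_type (f := fun st : S × T =>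
    P (st.1, st.2, v) / massOn P (fun ω : S × T × V => ω.2.2) v * F (st.1, st.2, v))]
  apply Finset.sum_congr rfl
  intro s _
  rw [Fintype.sum_prod_type]
  apply Finset.sum_congr rfl
  intro t _
  simp [ite_mul]

lemma covF_condDistOn_proj (P : S × T × V → ℝ) (v : V) (F G : S × T × V → ℝ) :
    covF (condDistOn P (fun ω : S × T × V => ω.2.2) v) F G
      = covF (fun st : S × T => P (st.1, st.2, v) / massOn P (fun ω : S × T × V => ω.2.2) v)
          (fun st => F (st.1, st.2, v)) (fun st => G (st.1, st.2, v)) := by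
  unfold covF
  rw [EE_condDistOn_proj P v (fun ω => F ω * G ω),
    EE_condDistOn_proj P v F, EE_condDistOn_proj P v G]

lemma condDist_proj_isProb {P : S × T × V → ℝ} (hP : IsProbF P) {v : V}
    (hv : 0 < massOn P (fun ω : S × T × V => ω.2.2) v) :
    IsProbF (fun st : S × T => P (st.1, st.2, v) / massOn P (fun ω : S × T × V => ω.2.2) v) := by
  constructor
  · intro st
    exact div_nonneg (hP.1 _) hv.le
  · rw [← Finset.sum_div, ← massOn_proj]
    exact div_self hv.ne'

end Aux4
section Aux5
variable {S T V : Type} [Fintype S] [Fintype T] [Fintype V] [DecidableEq V]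

lemma upper_aux {P : S × T × V → ℝ} (hP : IsProbF P) {M : ℝ} (hM0 : 0 ≤ M)
    (hmem : ∀ w : V, 0 < massOn P (fun ω : S × T × V => ω.2.2) w →
      maxCorrF (fun st : S × T => P (st.1, st.2, w) /
        massOn P (fun ω : S × T × V => ω.2.2) w) Prod.fst Prod.snd ≤ M)
    (f : S × V → ℝ) (g : T × V → ℝ) :
    condPearsonF P (fun ω : S × T × V => ω.2.2)
      (fun ω => f (ω.1, ω.2.2)) (fun ω => g (ω.2.1, ω.2.2)) ≤ M := by
  unfold condPearsonF
  split_ifs with hpos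
  · rw [div_le_iff₀ (Real.sqrt_pos.2 hpos)]
    have hterm : ∀ w : V, massOn P (fun ω : S × T × V => ω.2.2) w *
        covF (condDistOn P (fun ω : S × T × V => ω.2.2) w)
          (fun ω => f (ω.1, ω.2.2)) (fun ω => g (ω.2.1, ω.2.2))
        ≤ M * (massOn P (fun ω : S × T × V => ω.2.2) w *
          Real.sqrt (covF (condDistOn P (fun ω : S × T × V => ω.2.2) w)
              (fun ω => f (ω.1, ω.2.2)) (fun ω => f (ω.1, ω.2.2)) *
            covF (condDistOn P (fun ω : S × T × V => ω.2.2) w)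
              (fun ω => g (ω.2.1, ω.2.2)) (fun ω => g (ω.2.1, ω.2.2)))) := by
      intro w
      rcases (massOn_nonneg hP (fun ω : S × T × V => ω.2.2) w).eq_or_lt with h | h
      · rw [← h]; simp
      · have hQ'w := condDist_proj_isProb hP h
        have hcFG : covF (condDistOn P (fun ω : S × T × V => ω.2.2) w)
              (fun ω => f (ω.1, ω.2.2)) (fun ω => g (ω.2.1, ω.2.2))
            = covF (fun st : S × T => P (st.1, st.2, w) /
                massOn P (fun ω : S × T × V => ω.2.2) w)
              (fun st => f (st.1, w)) (fun st => g (st.2, w)) :=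
          covF_condDistOn_proj P w _ _
        have hcFF : covF (condDistOn P (fun ω : S × T × V => ω.2.2) w)
              (fun ω => f (ω.1, ω.2.2)) (fun ω => f (ω.1, ω.2.2))
            = covF (fun st : S × T => P (st.1, st.2, w) /
                massOn P (fun ω : S × T × V => ω.2.2) w)
              (fun st => f (st.1, w)) (fun st => f (st.1, w)) :=
          covF_condDistOn_proj P w _ _
        have hcGG : covF (condDistOn P (fun ω : S × T × V => ω.2.2) w)
              (fun ω => g (ω.2.1, ω.2.2)) (fun ω => g (ω.2.1, ω.2.2))
            = covF (fun st : S × T => P (st.1, st.2, w) /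
                massOn P (fun ω : S × T × V => ω.2.2) w)
              (fun st => g (st.2, w)) (fun st => g (st.2, w)) :=
          covF_condDistOn_proj P w _ _
        rw [hcFG, hcFF, hcGG]
        have hA := covF_self_nonneg hQ'w (fun st => f (st.1, w))
        have hB := covF_self_nonneg hQ'w (fun st => g (st.2, w))
        have hCM : covF (fun st : S × T => P (st.1, st.2, w) /
                massOn P (fun ω : S × T × V => ω.2.2) w)
              (fun st => f (st.1, w)) (fun st => g (st.2, w))
            ≤ M * Real.sqrt (covF (fun st : S × T => P (st.1, st.2, w) /
                massOn P (fun ω : S × T × V => ω.2.2) w)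
              (fun st => f (st.1, w)) (fun st => f (st.1, w)) *
              covF (fun st : S × T => P (st.1, st.2, w) /
                massOn P (fun ω : S × T × V => ω.2.2) w)
              (fun st => g (st.2, w)) (fun st => g (st.2, w))) := by
          by_cases hab : 0 < covF (fun st : S × T => P (st.1, st.2, w) /
                massOn P (fun ω : S × T × V => ω.2.2) w)
              (fun st => f (st.1, w)) (fun st => f (st.1, w)) *
              covF (fun st : S × T => P (st.1, st.2, w) /
                massOn P (fun ω : S × T × V => ω.2.2) w)
              (fun st => g (st.2, w)) (fun st => g (st.2, w))
          · have h1 : pearsonF (fun st : S × T => P (st.1, st.2, w) /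
                  massOn P (fun ω : S × T × V => ω.2.2) w)
                (fun st => f (st.1, w)) (fun st => g (st.2, w)) ≤ M :=
              le_trans (pearson_le_maxCorrF hQ'w Prod.fst Prod.snd
                (fun s => f (s, w)) (fun t => g (t, w))) (hmem w h)
            rw [pearsonF, if_pos hab, div_le_iff₀ (Real.sqrt_pos.2 hab)] at h1
            exact h1
          · have hab0 := le_antisymm (not_lt.1 hab) (mul_nonneg hA hB)
            have hc2 := covF_sq_le hQ'w (fun st => f (st.1, w)) (fun st => g (st.2, w))
            have hc0 : covF (fun st : S × T => P (st.1, st.2, w) /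
                massOn P (fun ω : S × T × V => ω.2.2) w)
              (fun st => f (st.1, w)) (fun st => g (st.2, w)) = 0 := by
              nlinarith [sq_nonneg (covF (fun st : S × T => P (st.1, st.2, w) /
                massOn P (fun ω : S × T × V => ω.2.2) w)
                (fun st => f (st.1, w)) (fun st => g (st.2, w)))]
            rw [hc0, hab0, Real.sqrt_zero, mul_zero]
        calc massOn P (fun ω : S × T × V => ω.2.2) w *
              covF (fun st : S × T => P (st.1, st.2, w) /
                massOn P (fun ω : S × T × V => ω.2.2) w)
                (fun st => f (st.1, w)) (fun st => g (st.2, w))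
            ≤ massOn P (fun ω : S × T × V => ω.2.2) w *
              (M * Real.sqrt (covF (fun st : S × T => P (st.1, st.2, w) /
                massOn P (fun ω : S × T × V => ω.2.2) w)
                (fun st => f (st.1, w)) (fun st => f (st.1, w)) *
                covF (fun st : S × T => P (st.1, st.2, w) /
                massOn P (fun ω : S × T × V => ω.2.2) w)
                (fun st => g (st.2, w)) (fun st => g (st.2, w)))) :=
              mul_le_mul_of_nonneg_left hCM h.le
          _ = _ := by ring
    calc ECondCov P (fun ω : S × T × V => ω.2.2)
          (fun ω => f (ω.1, ω.2.2)) (fun ω => g (ω.2.1, ω.2.2))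
        ≤ ∑ w, M * (massOn P (fun ω : S × T × V => ω.2.2) w *
          Real.sqrt (covF (condDistOn P (fun ω : S × T × V => ω.2.2) w)
              (fun ω => f (ω.1, ω.2.2)) (fun ω => f (ω.1, ω.2.2)) *
            covF (condDistOn P (fun ω : S × T × V => ω.2.2) w)
              (fun ω => g (ω.2.1, ω.2.2)) (fun ω => g (ω.2.1, ω.2.2)))) :=
        Finset.sum_le_sum fun w _ => hterm w
      _ = M * ∑ w, massOn P (fun ω : S × T × V => ω.2.2) w *
          Real.sqrt (covF (condDistOn P (fun ω : S × T × V => ω.2.2) w)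
              (fun ω => f (ω.1, ω.2.2)) (fun ω => f (ω.1, ω.2.2)) *
            covF (condDistOn P (fun ω : S × T × V => ω.2.2) w)
              (fun ω => g (ω.2.1, ω.2.2)) (fun ω => g (ω.2.1, ω.2.2))) := by
        rw [← Finset.mul_sum]
      _ ≤ M * Real.sqrt (ECondCov P (fun ω : S × T × V => ω.2.2)
            (fun ω => f (ω.1, ω.2.2)) (fun ω => f (ω.1, ω.2.2)) *
          ECondCov P (fun ω : S × T × V => ω.2.2)
            (fun ω => g (ω.2.1, ω.2.2)) (fun ω => g (ω.2.1, ω.2.2))) :=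
        mul_le_mul_of_nonneg_left (sum_massOn_sqrt_le hP _ _ _) hM0
  · exact hM0

end Aux5
section Aux6
variable {S T V : Type} [Fintype S] [Fintype T] [Fintype V] [DecidableEq V]

lemma ECondCov_single (P : S × T × V → ℝ) (v : V) (F G : S × T × V → ℝ)
    (hF : ∀ s t w, w ≠ v → F (s, t, w) = 0) (hG : ∀ s t w, w ≠ v → G (s, t, w) = 0) :
    ECondCov P (fun ω : S × T × V => ω.2.2) F G
      = massOn P (fun ω : S × T × V => ω.2.2) v *
        covF (fun st : S × T => P (st.1, st.2, v) / massOn P (fun ω : S × T × V => ω.2.2) v)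
          (fun st => F (st.1, st.2, v)) (fun st => G (st.1, st.2, v)) := by
  unfold ECondCov
  rw [Finset.sum_eq_single v]
  · rw [covF_condDistOn_proj]
  · intro w _ hw
    rw [covF_condDistOn_proj]
    have hzF : (fun st : S × T => F (st.1, st.2, w)) = fun _ => 0 := by
      funext st; exact hF _ _ _ hw
    rw [hzF, covF_zero_left, mul_zero]
  · simp

lemma lower_aux {P : S × T × V → ℝ} (hP : IsProbF P) (v : V)
    (hv : 0 < massOn P (fun ω : S × T × V => ω.2.2) v) :
    maxCorrF (fun st : S × T => P (st.1, st.2, v) / massOn P (fun ω : S × T × V => ω.2.2) v)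
        Prod.fst Prod.snd
      ≤ condMaxCorrF P (fun ω : S × T × V => ω.1) (fun ω => ω.2.1) (fun ω => ω.2.2) := by
  apply ciSup_le
  intro fg0
  have hbdd : BddAbove (Set.range fun fg : (S × V → ℝ) × (T × V → ℝ) =>
      condPearsonF P (fun ω : S × T × V => ω.2.2)
        (fun ω => fg.1 (ω.1, ω.2.2)) (fun ω => fg.2 (ω.2.1, ω.2.2))) := by
    refine ⟨1, ?_⟩
    rintro r ⟨fg, rfl⟩
    exact condPearsonF_le_one hP _ _ _
  -- cutoff functions
  set Fc : S × V → ℝ := fun xu => if xu.2 = v then fg0.1 xu.1 else 0 with hFc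
  set Gc : T × V → ℝ := fun yu => if yu.2 = v then fg0.2 yu.1 else 0 with hGc
  have key : pearsonF
        (fun st : S × T => P (st.1, st.2, v) / massOn P (fun ω : S × T × V => ω.2.2) v)
        (fun st => fg0.1 (Prod.fst st)) (fun st => fg0.2 (Prod.snd st))
      = condPearsonF P (fun ω : S × T × V => ω.2.2)
        (fun ω => Fc (ω.1, ω.2.2)) (fun ω => Gc (ω.2.1, ω.2.2)) := by
    have e1 : ECondCov P (fun ω : S × T × V => ω.2.2)
        (fun ω => Fc (ω.1, ω.2.2)) (fun ω => Gc (ω.2.1, ω.2.2))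
        = massOn P (fun ω : S × T × V => ω.2.2) v *
          covF (fun st : S × T => P (st.1, st.2, v) / massOn P (fun ω : S × T × V => ω.2.2) v)
            (fun st => fg0.1 st.1) (fun st => fg0.2 st.2) := by
      rw [ECondCov_single P v _ _
        (fun s t w hw => by simp [hFc, hw]) (fun s t w hw => by simp [hGc, hw])]
      simp [hFc, hGc]
    have e2 : ECondCov P (fun ω : S × T × V => ω.2.2)
        (fun ω => Fc (ω.1, ω.2.2)) (fun ω => Fc (ω.1, ω.2.2))
        = massOn P (fun ω : S × T × V => ω.2.2) v *
          covF (fun st : S × T => P (st.1, st.2, v) / massOn P (fun ω : S × T × V => ω.2.2) v)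
            (fun st => fg0.1 st.1) (fun st => fg0.1 st.1) := by
      rw [ECondCov_single P v _ _
        (fun s t w hw => by simp [hFc, hw]) (fun s t w hw => by simp [hFc, hw])]
      simp [hFc]
    have e3 : ECondCov P (fun ω : S × T × V => ω.2.2)
        (fun ω => Gc (ω.2.1, ω.2.2)) (fun ω => Gc (ω.2.1, ω.2.2))
        = massOn P (fun ω : S × T × V => ω.2.2) v *
          covF (fun st : S × T => P (st.1, st.2, v) / massOn P (fun ω : S × T × V => ω.2.2) v)
            (fun st => fg0.2 st.2) (fun st => fg0.2 st.2) := by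
      rw [ECondCov_single P v _ _
        (fun s t w hw => by simp [hGc, hw]) (fun s t w hw => by simp [hGc, hw])]
      simp [hGc]
    unfold condPearsonF pearsonF
    rw [e1, e2, e3]
    set p := massOn P (fun ω : S × T × V => ω.2.2) v with hp
    set A := covF (fun st : S × T => P (st.1, st.2, v) / p)
      (fun st => fg0.1 st.1) (fun st => fg0.1 st.1) with hA
    set B := covF (fun st : S × T => P (st.1, st.2, v) / p)
      (fun st => fg0.2 st.2) (fun st => fg0.2 st.2) with hB
    set C := covF (fun st : S × T => P (st.1, st.2, v) / p)
      (fun st => fg0.1 st.1) (fun st => fg0.2 st.2) with hC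
    have hiff : (0 < p * A * (p * B)) ↔ (0 < A * B) := by
      rw [show p * A * (p * B) = p * p * (A * B) by ring]
      exact mul_pos_iff_of_pos_left (mul_pos hv hv)
    have hsq : Real.sqrt (p * A * (p * B)) = p * Real.sqrt (A * B) := by
      rw [show p * A * (p * B) = p ^ 2 * (A * B) by ring,
        Real.sqrt_mul (sq_nonneg p), Real.sqrt_sq hv.le]
    split_ifs with h1 h2 h2
    · rw [hsq, mul_div_mul_left _ _ hv.ne']
    · exact absurd (hiff.2 h1) h2
    · exact absurd (hiff.1 h2) h1
    · rfl
  rw [show (fun st : S × T => fg0.1 (Prod.fst st)) = fun st : S × T => fg0.1 st.1 from rfl,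
    show (fun st : S × T => fg0.2 (Prod.snd st)) = fun st : S × T => fg0.2 st.2 from rfl] at key
  calc pearsonF
        (fun st : S × T => P (st.1, st.2, v) / massOn P (fun ω : S × T × V => ω.2.2) v)
        (fun st => fg0.1 st.1) (fun st => fg0.2 st.2)
      = condPearsonF P (fun ω : S × T × V => ω.2.2)
        (fun ω => Fc (ω.1, ω.2.2)) (fun ω => Gc (ω.2.1, ω.2.2)) := key
    _ ≤ _ := le_ciSup hbdd (Fc, Gc)

end Aux6
/-- **Conditional maximal correlation as a maximum over conditionings.** For jointly
distributed `(X, Y, U)` on finite alphabets,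
`ρ_m(X;Y|U) = max_{u : P_U(u) > 0} ρ_m(X;Y|U=u)`, where `ρ_m(X;Y|U=u)` is the
(unconditional) maximal correlation of a pair distributed according to `P_{XY|U=u}`. -/
theorem condMaxCorr_eq_max (S T V : Type) [Fintype S] [Fintype T] [Fintype V]
    [DecidableEq V] (P : S × T × V → ℝ) (hP : IsProbF P) :
    condMaxCorrF P (fun ω => ω.1) (fun ω => ω.2.1) (fun ω => ω.2.2) =
      sSup { r : ℝ | ∃ v : V, 0 < massOn P (fun ω => ω.2.2) v ∧
        r = maxCorrF
          (fun st : S × T => P (st.1, st.2, v) / massOn P (fun ω => ω.2.2) v)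
          Prod.fst Prod.snd } := by
  have hSbdd : BddAbove { r : ℝ | ∃ v : V, 0 < massOn P (fun ω : S × T × V => ω.2.2) v ∧
      r = maxCorrF
        (fun st : S × T => P (st.1, st.2, v) / massOn P (fun ω : S × T × V => ω.2.2) v)
        Prod.fst Prod.snd } := by
    refine ⟨1, ?_⟩
    rintro r ⟨v, hv, rfl⟩
    exact maxCorrF_le_one (condDist_proj_isProb hP hv) _ _
  have hSne : Set.Nonempty { r : ℝ | ∃ v : V,
      0 < massOn P (fun ω : S × T × V => ω.2.2) v ∧
      r = maxCorrF
        (fun st : S × T => P (st.1, st.2, v) / massOn P (fun ω : S × T × V => ω.2.2) v)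
        Prod.fst Prod.snd } := by
    obtain ⟨v, hv⟩ := exists_massOn_pos hP (fun ω : S × T × V => ω.2.2)
    exact ⟨_, v, hv, rfl⟩
  have hM0 : 0 ≤ sSup { r : ℝ | ∃ v : V,
      0 < massOn P (fun ω : S × T × V => ω.2.2) v ∧
      r = maxCorrF
        (fun st : S × T => P (st.1, st.2, v) / massOn P (fun ω : S × T × V => ω.2.2) v)
        Prod.fst Prod.snd } := by
    obtain ⟨r, v, hv, hr⟩ := hSne
    refine le_trans ?_ (le_csSup hSbdd ⟨v, hv, hr⟩)
    rw [hr]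
    exact maxCorrF_nonneg (condDist_proj_isProb hP hv) _ _
  apply le_antisymm
  · refine ciSup_le fun fg => ?_
    exact upper_aux hP hM0
      (fun w hw => le_csSup hSbdd ⟨w, hw, rfl⟩) fg.1 fg.2
  · refine csSup_le hSne ?_
    rintro r ⟨v, hv, rfl⟩
    exact lower_aux hP v hv
end
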